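/- Let 𝒞 be a left triangulated category with endofunctor Ω, let 𝒳 be a dℤ-cluster tilting subcategory, and let ℤ𝒳 denote the stabilization of 𝒳 with respect to Ω^d (objects (X,n), morphisms colim_k Hom(Ω^{d(n+k)}X, Ω^{d(n'+k)}X')). Then the canonical functor ℤ𝒳 → ℤ𝒞 sending (X,n) to (X,dn) induces an equivalence of categories ℤ𝒳 ≃ dℤ𝒳, where dℤ𝒳 is the full subcategory of ℤ𝒞 of objects isomorphic to some (X, dk) with X ∈ 𝒳. -/

import Mathlib

open CategoryTheory CategoryTheory.Limits ZeroObject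

universe w w' v u

namespace Paper

variable (C : Type u) [Category.{v} C] [Preadditive C] [HasZeroObject C] [HasBinaryBiproducts C]

/-- A Quillen exact structure on an additive category: a class of distinguished
kernel-cokernel pairs (`ses f g` meaning `0 → X → Y → Z → 0` is a conflation)
satisfying the axioms of exact categories. -/
structure ExactStructure where
  ses : ∀ ⦃X Y Z : C⦄, (X ⟶ Y) → (Y ⟶ Z) → Prop
  comp_zero : ∀ ⦃X Y Z : C⦄ {f : X ⟶ Y} {g : Y ⟶ Z}, ses f g → f ≫ g = 0
  isKernel : ∀ ⦃X Y Z : C⦄ {f : X ⟶ Y} {g : Y ⟶ Z} (h : ses f g),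
      Nonempty (IsLimit (KernelFork.ofι f (comp_zero h)))
  isCokernel : ∀ ⦃X Y Z : C⦄ {f : X ⟶ Y} {g : Y ⟶ Z} (h : ses f g),
      Nonempty (IsColimit (CokernelCofork.ofπ g (comp_zero h)))
  ses_id_zero : ∀ X : C, ses (𝟙 X) (0 : X ⟶ 0)
  ses_zero_id : ∀ X : C, ses (0 : (0 : C) ⟶ X) (𝟙 X)
  ses_split : ∀ X Y : C, ses (biprod.inl : X ⟶ X ⊞ Y) (biprod.snd : X ⊞ Y ⟶ Y)
  infl_comp : ∀ ⦃X Y Z : C⦄ {f : X ⟶ Y} {g : Y ⟶ Z},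
      (∃ (U : C) (u : Y ⟶ U), ses f u) → (∃ (V : C) (v : Z ⟶ V), ses g v) →
      ∃ (W : C) (w : Z ⟶ W), ses (f ≫ g) w
  defl_comp : ∀ ⦃X Y Z : C⦄ {f : X ⟶ Y} {g : Y ⟶ Z},
      (∃ (U : C) (u : U ⟶ X), ses u f) → (∃ (V : C) (v : V ⟶ Y), ses v g) →
      ∃ (W : C) (w : W ⟶ X), ses w (f ≫ g)
  pushout_infl : ∀ ⦃X Y Z : C⦄ (f : X ⟶ Y) (g : X ⟶ Z),
      (∃ (U : C) (u : Y ⟶ U), ses f u) →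
      ∃ (W : C) (h : Y ⟶ W) (k : Z ⟶ W), (∃ (V : C) (v : W ⟶ V), ses k v) ∧ IsPushout f g h k
  pullback_defl : ∀ ⦃X Y Z : C⦄ (f : Y ⟶ X) (g : Z ⟶ X),
      (∃ (U : C) (u : U ⟶ Y), ses u f) →
      ∃ (W : C) (h : W ⟶ Y) (k : W ⟶ Z), (∃ (V : C) (v : V ⟶ W), ses v h) ∧ IsPullback h k f g

variable {C}

/-- Admissible monomorphisms. -/
def ExactStructure.Inflation (E : ExactStructure C) {X Y : C} (f : X ⟶ Y) : Prop :=
  ∃ (Z : C) (g : Y ⟶ Z), E.ses f g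

/-- Admissible epimorphisms. -/
def ExactStructure.Deflation (E : ExactStructure C) {Y Z : C} (g : Y ⟶ Z) : Prop :=
  ∃ (X : C) (f : X ⟶ Y), E.ses f g

/-- Projective objects with respect to an exact structure. -/
def ExactStructure.Proj (E : ExactStructure C) (P : C) : Prop :=
  ∀ ⦃Y Z : C⦄ (g : Y ⟶ Z), E.Deflation g → ∀ h : P ⟶ Z, ∃ k : P ⟶ Y, k ≫ g = h

/-- The exact category has enough projectives. -/
def EnoughProj (E : ExactStructure C) : Prop :=
  ∀ X : C, ∃ (P : C) (p : P ⟶ X), E.Proj P ∧ E.Deflation p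

/-- The stable relation: two morphisms are identified iff their difference factors
through a projective object. -/
def stableRel (E : ExactStructure C) : HomRel C := fun {X Y} f g =>
  ∃ (P : C) (a : X ⟶ P) (b : P ⟶ Y), E.Proj P ∧ a ≫ b = f - g

/-- The stable category `ℰ/𝒫`. -/
abbrev St (E : ExactStructure C) := CategoryTheory.Quotient (stableRel E)

/-- The projection functor `ℰ → ℰ/𝒫`. -/
def stq (E : ExactStructure C) : C ⥤ St E := Quotient.functor _

end Paper

namespace Paper

variable {C : Type u} [Category.{v} C] [Preadditive C] [HasZeroObject C] [HasBinaryBiproducts C]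

/-- An `n`-fold Yoneda extension `0 → B → X_n → ⋯ → X_1 → A → 0`, encoded
recursively by splicing off the leftmost conflation. -/
inductive NExt (E : ExactStructure C) : ℕ → C → C → Type (max u v)
  | one {A B Y : C} (f : B ⟶ Y) (g : Y ⟶ A) (h : E.ses f g) : NExt E 1 A B
  | step {A B K Y : C} {n : ℕ} (f : B ⟶ Y) (g : Y ⟶ K) (h : E.ses f g)
      (ξ : NExt E n A K) : NExt E (n + 1) A B

/-- Morphisms of Yoneda extensions over given maps on the two end objects. -/
inductive NExtMor (E : ExactStructure C) :
    ∀ {n : ℕ} {A A' B B' : C}, (B ⟶ B') → (A ⟶ A') → NExt E n A B → NExt E n A' B' → Prop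
  | one {A A' B B' Y Y' : C} {β : B ⟶ B'} {α : A ⟶ A'}
      {f : B ⟶ Y} {g : Y ⟶ A} {h : E.ses f g}
      {f' : B' ⟶ Y'} {g' : Y' ⟶ A'} {h' : E.ses f' g'}
      (y : Y ⟶ Y') (hy₁ : f ≫ y = β ≫ f') (hy₂ : y ≫ g' = g ≫ α) :
      NExtMor E β α (NExt.one f g h) (NExt.one f' g' h')
  | step {n : ℕ} {A A' B B' K K' Y Y' : C} {β : B ⟶ B'} {α : A ⟶ A'}
      {f : B ⟶ Y} {g : Y ⟶ K} {h : E.ses f g} {ξ : NExt E n A K}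
      {f' : B' ⟶ Y'} {g' : Y' ⟶ K'} {h' : E.ses f' g'} {ξ' : NExt E n A' K'}
      (y : Y ⟶ Y') (k : K ⟶ K') (hy₁ : f ≫ y = β ≫ f') (hy₂ : y ≫ g' = g ≫ k)
      (tail : NExtMor E k α ξ ξ') :
      NExtMor E β α (NExt.step f g h ξ) (NExt.step f' g' h' ξ')

/-- Yoneda equivalence of `n`-extensions: the equivalence relation generated by
morphisms of extensions which are the identity on both end objects. -/
def ExtEquiv (E : ExactStructure C) {n : ℕ} {A B : C} (ξ ξ' : NExt E n A B) : Prop :=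
  Relation.EqvGen (fun a b => NExtMor E (𝟙 B) (𝟙 A) a b) ξ ξ'

/-- The trivial `(n+1)`-extension of `A` by the zero object. -/
noncomputable def trivN (E : ExactStructure C) : (n : ℕ) → (A : C) → NExt E (n + 1) A (0 : C)
  | 0, A => NExt.one (0 : (0 : C) ⟶ A) (𝟙 A) (E.ses_zero_id A)
  | n + 1, A => NExt.step (𝟙 (0 : C)) (0 : (0 : C) ⟶ (0 : C)) (E.ses_id_zero (0 : C)) (trivN E n A)

/-- The trivial (split) `(n+1)`-extension of `A` by `B`. -/
noncomputable def trivExt (E : ExactStructure C) : (n : ℕ) → (A B : C) → NExt E (n + 1) A B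
  | 0, A, B => NExt.one (biprod.inl : B ⟶ B ⊞ A) (biprod.snd : B ⊞ A ⟶ A) (E.ses_split B A)
  | n + 1, A, B => NExt.step (𝟙 B) (0 : B ⟶ (0 : C)) (E.ses_id_zero B) (trivN E n A)

/-- `extVanish E n A B` means `Ext^n_ℰ(A, B) = 0`: every `n`-fold Yoneda extension
of `A` by `B` is Yoneda-equivalent to the trivial one. -/
def extVanish (E : ExactStructure C) : ℕ → C → C → Prop
  | 0, _, _ => True
  | n + 1, A, B => ∀ ξ : NExt E (n + 1) A B, ExtEquiv E ξ (trivExt E n A B)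

/-- `MRes E M n X` : there is an exact sequence `0 → M_n → ⋯ → M_1 → X → 0`
with all `M_j ∈ M`. -/
inductive MRes (E : ExactStructure C) (M : Set C) : ℕ → C → Prop
  | iso {X M₀ : C} (hM : M₀ ∈ M) (f : M₀ ⟶ X) (hf : IsIso f) : MRes E M 1 X
  | step {X K M₀ : C} {n : ℕ} (hM : M₀ ∈ M) (i : K ⟶ M₀) (p : M₀ ⟶ X)
      (hses : E.ses i p) (hK : MRes E M n K) : MRes E M (n + 1) X

/-- `CoRes E M n X` : there is an exact sequence `0 → X → M^1 → ⋯ → M^n → 0`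
with all `M^j ∈ M`. -/
inductive CoRes (E : ExactStructure C) (M : Set C) : ℕ → C → Prop
  | iso {X M₀ : C} (hM : M₀ ∈ M) (f : X ⟶ M₀) (hf : IsIso f) : CoRes E M 1 X
  | step {X K M₀ : C} {n : ℕ} (hM : M₀ ∈ M) (i : X ⟶ M₀) (p : M₀ ⟶ K)
      (hses : E.ses i p) (hK : CoRes E M n K) : CoRes E M (n + 1) X

/-- Right `M`-approximations. -/
def RightApprox {D : Type w} [Category.{w'} D] (M : Set D) {M₀ X : D} (f : M₀ ⟶ X) : Prop :=
  ∀ M' ∈ M, ∀ g : M' ⟶ X, ∃ h : M' ⟶ M₀, h ≫ f = g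

/-- Left `M`-approximations. -/
def LeftApprox {D : Type w} [Category.{w'} D] (M : Set D) {X M₀ : D} (f : X ⟶ M₀) : Prop :=
  ∀ M' ∈ M, ∀ g : X ⟶ M', ∃ h : M₀ ⟶ M', f ≫ h = g

/-- `d`-cluster tilting subcategory of an exact category (Definition 4.1). -/
structure ClusterTiltingExact (E : ExactStructure C) (M : Set C) (d : ℕ) : Prop where
  contra : ∀ X : C, ∃ (M₀ : C) (f : M₀ ⟶ X), M₀ ∈ M ∧ RightApprox M f
  cova : ∀ X : C, ∃ (M₀ : C) (f : X ⟶ M₀), M₀ ∈ M ∧ LeftApprox M f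
  gen : ∀ X : C, ∃ (M₀ : C) (f : M₀ ⟶ X), M₀ ∈ M ∧ E.Deflation f
  cogen : ∀ X : C, ∃ (M₀ : C) (f : X ⟶ M₀), M₀ ∈ M ∧ E.Inflation f
  eq_left : M = {X : C | ∀ M' ∈ M, ∀ i : ℕ, 1 ≤ i → i + 1 ≤ d → extVanish E i X M'}
  eq_right : M = {X : C | ∀ M' ∈ M, ∀ i : ℕ, 1 ≤ i → i + 1 ≤ d → extVanish E i M' X}

/-- `dℤ`-cluster tilting subcategory of an exact category: `d`-cluster tilting and
`Ext^i(ℳ,ℳ) = 0` for `i ∉ dℤ`. -/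
def ClusterTiltingExactDZ (E : ExactStructure C) (M : Set C) (d : ℕ) : Prop :=
  ClusterTiltingExact E M d ∧
    ∀ M₀ ∈ M, ∀ M₁ ∈ M, ∀ i : ℕ, 0 < i → ¬ (d ∣ i) → extVanish E i M₀ M₁

end Paper

namespace Paper

variable {C : Type u} [Category.{v} C] [Preadditive C] [HasZeroObject C] [HasBinaryBiproducts C]

/-- Iterated composition power of an endofunctor. -/
def fpow {D : Type w} [Category.{w'} D] (F : D ⥤ D) : ℕ → D ⥤ D
  | 0 => 𝟭 D
  | n + 1 => fpow F n ⋙ F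

/-- An `Ω`-sequence `Ω obj₃ → obj₁ → obj₂ → obj₃`. -/
structure LTTriangle (D : Type w) [Category.{w'} D] (Om : D ⥤ D) where
  obj₁ : D
  obj₂ : D
  obj₃ : D
  m₀ : Om.obj obj₃ ⟶ obj₁
  m₁ : obj₁ ⟶ obj₂
  m₂ : obj₂ ⟶ obj₃

/-- Isomorphism of `Ω`-sequences. -/
def LTTriangle.IsoSeq {D : Type w} [Category.{w'} D] {Om : D ⥤ D}
    (T T' : LTTriangle D Om) : Prop :=
  ∃ (e₁ : T.obj₁ ≅ T'.obj₁) (e₂ : T.obj₂ ≅ T'.obj₂) (e₃ : T.obj₃ ≅ T'.obj₃),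
    T.m₀ ≫ e₁.hom = Om.map e₃.hom ≫ T'.m₀ ∧
    T.m₁ ≫ e₂.hom = e₁.hom ≫ T'.m₁ ∧
    T.m₂ ≫ e₃.hom = e₂.hom ≫ T'.m₂

/-- A left triangulated structure on an additive category with endofunctor `Ω`
(Definition 3.1: axioms (T0)–(T5)). -/
structure LeftTriangStruct (D : Type w) [Category.{w'} D] [Preadditive D] [HasZeroObject D]
    (Om : D ⥤ D) where
  dist : Set (LTTriangle D Om)
  omAdd : Om.Additive
  iso_closed : ∀ T T' : LTTriangle D Om, T ∈ dist → T.IsoSeq T' → T' ∈ dist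
  contractible : ∀ X : D, LTTriangle.mk X X 0 0 (𝟙 X) 0 ∈ dist
  complete : ∀ {B Z : D} (w : B ⟶ Z),
      ∃ (A : D) (u : Om.obj Z ⟶ A) (v : A ⟶ B), LTTriangle.mk A B Z u v w ∈ dist
  rotate : ∀ T ∈ dist,
      LTTriangle.mk (Om.obj T.obj₃) T.obj₁ T.obj₂ (-Om.map T.m₂) T.m₀ T.m₁ ∈ dist
  complete_mor : ∀ T T' : LTTriangle D Om, T ∈ dist → T' ∈ dist →
      ∀ (g : T.obj₂ ⟶ T'.obj₂) (h : T.obj₃ ⟶ T'.obj₃), T.m₂ ≫ h = g ≫ T'.m₂ →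
      ∃ f : T.obj₁ ⟶ T'.obj₁, T.m₁ ≫ g = f ≫ T'.m₁ ∧ T.m₀ ≫ f = Om.map h ≫ T'.m₀
  octa : ∀ {A B Cc D₀ E₀ : D} {u : Om.obj Cc ⟶ A} {v : A ⟶ B} {w : B ⟶ Cc}
      {f : Om.obj D₀ ⟶ E₀} {g : E₀ ⟶ Cc} {h : Cc ⟶ D₀},
      LTTriangle.mk A B Cc u v w ∈ dist → LTTriangle.mk E₀ Cc D₀ f g h ∈ dist →
      ∃ (F : D) (α : A ⟶ F) (i : Om.obj D₀ ⟶ F) (j : F ⟶ B) (β : F ⟶ E₀),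
        LTTriangle.mk F B D₀ i j (w ≫ h) ∈ dist ∧
        LTTriangle.mk A F E₀ (Om.map g ≫ u) α β ∈ dist ∧
        u ≫ α = Om.map h ≫ i ∧ α ≫ j = v ∧ j ≫ w = β ≫ g

/-- A chain (tower) of triangles `Ω Z_{j-1} → Z_j → M_j → Z_{j-1}` with all middle
terms `M_j` in `X`, used to encode `(d+2)`-angles. -/
inductive LTChain {D : Type w} [Category.{w'} D] [Preadditive D] [HasZeroObject D]
    {Om : D ⥤ D} (L : LeftTriangStruct D Om) (X : Set D) : ℕ → D → D → Prop
  | zero (A : D) : LTChain L X 0 A A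
  | succ {n : ℕ} {A B B' M : D} (hc : LTChain L X n A B) (hM : M ∈ X)
      (u : Om.obj B ⟶ B') (v : B' ⟶ M) (w : M ⟶ B)
      (ht : LTTriangle.mk B' M B u v w ∈ L.dist) : LTChain L X (n + 1) A B'

/-- `d`-cluster tilting subcategory of a left triangulated category (Definition 5.1). -/
structure ClusterTiltingLT {D : Type w} [Category.{w'} D] [Preadditive D] [HasZeroObject D]
    {Om : D ⥤ D} (L : LeftTriangStruct D Om) (X : Set D) (d : ℕ) : Prop where
  summand_closed : ∀ {A Z : D}, Z ∈ X → ∀ (s : A ⟶ Z) (r : Z ⟶ A), s ≫ r = 𝟙 A → A ∈ X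
  /-- every object admits a `(d+2)`-angle `0 → C → X¹ → ⋯ → X^d → 0` with `Xⁱ ∈ X` -/
  cores : ∀ Cobj : D, ∃ Z₀ : D, IsZero Z₀ ∧ LTChain L X d Z₀ Cobj
  /-- every object admits a `(d+2)`-angle `0 → X_d → ⋯ → X_1 → C → 0` with `X_i ∈ X` -/
  res : ∀ Cobj : D, ∃ (Z₀ Z₁ W : D) (u : Om.obj Z₀ ⟶ Z₁) (v : Z₁ ⟶ Cobj) (w : Cobj ⟶ Z₀),
      IsZero Z₀ ∧ LTTriangle.mk Z₁ Cobj Z₀ u v w ∈ L.dist ∧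
      LTChain L X (d - 1) Z₁ W ∧ W ∈ X
  om_bij : ∀ (Cobj X₀ : D), X₀ ∈ X → ∀ i : ℕ, i + 2 ≤ d →
      Function.Bijective (fun f : (fpow Om i).obj X₀ ⟶ Cobj => Om.map f)
  hom_vanish : ∀ (X₀ X₁ : D), X₀ ∈ X → X₁ ∈ X → ∀ i : ℕ, 1 ≤ i → i + 1 ≤ d →
      ∀ f : (fpow Om i).obj X₁ ⟶ X₀, f = 0

/-- `dℤ`-cluster tilting subcategory of a left triangulated category:
`d`-cluster tilting and `Ω^d(X) ⊆ X`. -/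
def ClusterTiltingLTDZ {D : Type w} [Category.{w'} D] [Preadditive D] [HasZeroObject D]
    {Om : D ⥤ D} (L : LeftTriangStruct D Om) (X : Set D) (d : ℕ) : Prop :=
  ClusterTiltingLT L X d ∧ ∀ A ∈ X, (fpow Om d).obj A ∈ X

/-- A triangle `X → Y → Z → ΣX` for a suspension endofunctor. -/
structure Tri (T : Type w) [Category.{w'} T] (Sf : T ⥤ T) where
  obj₁ : T
  obj₂ : T
  obj₃ : T
  m₁ : obj₁ ⟶ obj₂
  m₂ : obj₂ ⟶ obj₃
  m₃ : obj₃ ⟶ Sf.obj obj₁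

/-- Isomorphism of candidate triangles. -/
def Tri.IsoTri {T : Type w} [Category.{w'} T] {Sf : T ⥤ T} (T₁ T₂ : Tri T Sf) : Prop :=
  ∃ (e₁ : T₁.obj₁ ≅ T₂.obj₁) (e₂ : T₁.obj₂ ≅ T₂.obj₂) (e₃ : T₁.obj₃ ≅ T₂.obj₃),
    T₁.m₁ ≫ e₂.hom = e₁.hom ≫ T₂.m₁ ∧
    T₁.m₂ ≫ e₃.hom = e₂.hom ≫ T₂.m₂ ∧
    T₁.m₃ ≫ Sf.map e₁.hom = e₃.hom ≫ T₂.m₃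

/-- `dist` is a triangulated structure on `T` with suspension the equivalence `Se`
(the classical Verdier axioms TR0–TR4). -/
structure TriangStructOn (T : Type w) [Category.{w'} T] [Preadditive T] [HasZeroObject T]
    (Se : T ≌ T) (dist : Set (Tri T Se.functor)) : Prop where
  iso_closed : ∀ T₁ T₂ : Tri T Se.functor, T₁ ∈ dist → T₁.IsoTri T₂ → T₂ ∈ dist
  id_tri : ∀ X : T, Tri.mk X X 0 (𝟙 X) 0 0 ∈ dist
  complete : ∀ {X Y : T} (f : X ⟶ Y),
      ∃ (Z : T) (g : Y ⟶ Z) (h : Z ⟶ Se.functor.obj X), Tri.mk X Y Z f g h ∈ dist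
  rotate : ∀ T₁ ∈ dist,
      Tri.mk T₁.obj₂ T₁.obj₃ (Se.functor.obj T₁.obj₁) T₁.m₂ T₁.m₃ (-(Se.functor.map T₁.m₁)) ∈ dist
  unrotate : ∀ {X Y Z : T} (f : X ⟶ Y) (g : Y ⟶ Z) (h : Z ⟶ Se.functor.obj X),
      Tri.mk Y Z (Se.functor.obj X) g h (-(Se.functor.map f)) ∈ dist →
      Tri.mk X Y Z f g h ∈ dist
  complete_mor : ∀ T₁ T₂ : Tri T Se.functor, T₁ ∈ dist → T₂ ∈ dist →
      ∀ (a : T₁.obj₁ ⟶ T₂.obj₁) (b : T₁.obj₂ ⟶ T₂.obj₂), T₁.m₁ ≫ b = a ≫ T₂.m₁ →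
      ∃ c : T₁.obj₃ ⟶ T₂.obj₃, T₁.m₂ ≫ c = b ≫ T₂.m₂ ∧ T₁.m₃ ≫ Se.functor.map a = c ≫ T₂.m₃
  octa : ∀ {X Y Z U V W : T} (u : X ⟶ Y) (v : Y ⟶ Z) (a : Y ⟶ U) (a' : U ⟶ Se.functor.obj X)
      (b : Z ⟶ V) (b' : V ⟶ Se.functor.obj Y) (c : Z ⟶ W) (c' : W ⟶ Se.functor.obj X),
      Tri.mk X Y U u a a' ∈ dist → Tri.mk Y Z V v b b' ∈ dist →
      Tri.mk X Z W (u ≫ v) c c' ∈ dist →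
      ∃ (f₁ : U ⟶ W) (f₂ : W ⟶ V),
        Tri.mk U W V f₁ f₂ (b' ≫ Se.functor.map a) ∈ dist ∧
        a ≫ f₁ = v ≫ c ∧ f₁ ≫ c' = a' ∧ c ≫ f₂ = b ∧ f₂ ≫ b' = c' ≫ Se.functor.map u

/-- `d`-cluster tilting subcategory of a category with suspension functor `Sf`
(the triangulated-sense definition, Definition 4.1 with `Ext^i(X,Y) = Hom(X, Σ^i Y)`). -/
structure ClusterTiltingTri (T : Type w) [Category.{w'} T] [Preadditive T]
    (Sf : T ⥤ T) (M : Set T) (d : ℕ) : Prop where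
  contra : ∀ X : T, ∃ (M₀ : T) (f : M₀ ⟶ X), M₀ ∈ M ∧ RightApprox M f
  cova : ∀ X : T, ∃ (M₀ : T) (f : X ⟶ M₀), M₀ ∈ M ∧ LeftApprox M f
  eq_left : M = {Eo : T | ∀ M' ∈ M, ∀ i : ℕ, 1 ≤ i → i + 1 ≤ d →
      ∀ f : Eo ⟶ (fpow Sf i).obj M', f = 0}
  eq_right : M = {Eo : T | ∀ M' ∈ M, ∀ i : ℕ, 1 ≤ i → i + 1 ≤ d →
      ∀ f : M' ⟶ (fpow Sf i).obj Eo, f = 0}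

/-- `dℤ`-cluster tilting subcategory in the triangulated sense:
`d`-cluster tilting and `Σ^d(M) ⊆ M`. -/
def ClusterTiltingTriDZ (T : Type w) [Category.{w'} T] [Preadditive T]
    (Sf : T ⥤ T) (M : Set T) (d : ℕ) : Prop :=
  ClusterTiltingTri T Sf M d ∧ ∀ A ∈ M, (fpow Sf d).obj A ∈ M

/-- Integer powers of an auto-equivalence. -/
def zpow {T : Type w} [Category.{w'} T] (Se : T ≌ T) : ℤ → T ⥤ T
  | Int.ofNat n => fpow Se.functor n
  | Int.negSucc n => fpow Se.inverse (n + 1)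

end Paper

namespace Paper

variable {C : Type u} [Category.{v} C] [Preadditive C] [HasZeroObject C] [HasBinaryBiproducts C]

/-- Raising a morphism `Ω^a X ⟶ Ω^b Y` by applying `F` `j` more times. -/
def raiseN {D : Type w} [Category.{w'} D] (F : D ⥤ D) :
    ∀ (j : ℕ) {X Y : D} {a b : ℕ},
      ((fpow F a).obj X ⟶ (fpow F b).obj Y) → ((fpow F (a + j)).obj X ⟶ (fpow F (b + j)).obj Y)
  | 0, _, _, _, _, f => f
  | j + 1, _, _, _, _, f => F.map (raiseN F j f)

/-- `S` is (a realization of) the stabilization `ℤD` of the category `D` with respect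
to the endofunctor `F`: objects are pairs `(X, n)`, `X ∈ D`, `n ∈ ℤ`, and
`Hom((X,m),(Y,n)) = colim_k Hom(F^{m+k} X, F^{n+k} Y)`.  The data consists of the
objects `obj X n` together with the structure maps `lift` into the colimit, and the
axioms say exactly that the hom groups are the filtered colimits above and that every
object of `S` is isomorphic to some `(X, n)`. -/
structure IsStabilization {D : Type u'} [Category.{v'} D] [Preadditive D] (F : D ⥤ D)
    (S : Type w) [Category.{w'} S] [Preadditive S] where
  obj : D → ℤ → S
  lift : ∀ {X Y : D} (a b : ℕ) (m n : ℤ), (a : ℤ) + n = (b : ℤ) + m →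
      (((fpow F a).obj X) ⟶ ((fpow F b).obj Y)) → (obj X m ⟶ obj Y n)
  lift_raise : ∀ {X Y : D} (a b : ℕ) (m n : ℤ) (h : (a : ℤ) + n = (b : ℤ) + m)
      (h' : ((a + 1 : ℕ) : ℤ) + n = ((b + 1 : ℕ) : ℤ) + m)
      (f : (fpow F a).obj X ⟶ (fpow F b).obj Y),
      lift (a + 1) (b + 1) m n h' (F.map f) = lift a b m n h f
  lift_id : ∀ {X : D} (a : ℕ) (n : ℤ) (h : (a : ℤ) + n = (a : ℤ) + n),
      lift a a n n h (𝟙 ((fpow F a).obj X)) = 𝟙 (obj X n)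
  lift_comp : ∀ {X Y Z : D} (a b c : ℕ) (m n p : ℤ)
      (hab : (a : ℤ) + n = (b : ℤ) + m) (hbc : (b : ℤ) + p = (c : ℤ) + n)
      (hac : (a : ℤ) + p = (c : ℤ) + m)
      (f : (fpow F a).obj X ⟶ (fpow F b).obj Y) (g : (fpow F b).obj Y ⟶ (fpow F c).obj Z),
      lift a b m n hab f ≫ lift b c n p hbc g = lift a c m p hac (f ≫ g)
  lift_add : ∀ {X Y : D} (a b : ℕ) (m n : ℤ) (h : (a : ℤ) + n = (b : ℤ) + m)
      (f g : (fpow F a).obj X ⟶ (fpow F b).obj Y),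
      lift a b m n h (f + g) = lift a b m n h f + lift a b m n h g
  lift_surj : ∀ {X Y : D} {m n : ℤ} (φ : obj X m ⟶ obj Y n),
      ∃ (a b : ℕ) (h : (a : ℤ) + n = (b : ℤ) + m) (f : (fpow F a).obj X ⟶ (fpow F b).obj Y),
        φ = lift a b m n h f
  lift_inj : ∀ {X Y : D} (a b a' b' : ℕ) (m n : ℤ)
      (h : (a : ℤ) + n = (b : ℤ) + m) (h' : (a' : ℤ) + n = (b' : ℤ) + m)
      (f : (fpow F a).obj X ⟶ (fpow F b).obj Y)
      (f' : (fpow F a').obj X ⟶ (fpow F b').obj Y),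
      lift a b m n h f = lift a' b' m n h' f' →
      ∃ (j j' : ℕ), a + j = a' + j' ∧ b + j = b' + j' ∧
        HEq (raiseN F j f) (raiseN F j' f')
  dense : ∀ s : S, ∃ (X : D) (n : ℤ), Nonempty (s ≅ obj X n)

/-- The subcategory `dℤ𝒳` of the stabilization: all objects isomorphic to some
`(X, dk)` with `X ∈ 𝒳`, `k ∈ ℤ`. -/
def dZSet {D : Type u'} [Category.{v'} D] [Preadditive D] {F : D ⥤ D}
    {S : Type w} [Category.{w'} S] [Preadditive S] (st : IsStabilization F S)
    (X : Set D) (d : ℕ) : Set S :=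
  {s | ∃ (A : D) (k : ℤ), A ∈ X ∧ Nonempty (s ≅ st.obj A ((d : ℤ) * k))}

/-- The standard triangles of the stabilization of a left triangulated category:
those induced by a sequence in `D` whose sign-twist by `(-1)^k` is a triangle. -/
def stdTriangles {D : Type u'} [Category.{v'} D] [Preadditive D] [HasZeroObject D]
    {Om : D ⥤ D} (L : LeftTriangStruct D Om)
    {S : Type w} [Category.{w'} S] [Preadditive S] (st : IsStabilization Om S)
    (Se : S ≌ S) (σ : ∀ (A : D) (n : ℤ), Se.functor.obj (st.obj A n) ≅ st.obj A (n - 1)) :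
    Set (Tri S Se.functor) :=
  {T | ∃ (C₁ C₂ C₃ : D) (n₁ n₂ n₃ k : ℤ) (a₁ a₂ a₃ : ℕ),
    (a₁ : ℤ) = n₁ + k ∧ (a₂ : ℤ) = n₂ + k ∧ (a₃ : ℤ) = n₃ + k ∧
    ∃ (u : (fpow Om (a₁ + 1)).obj C₁ ⟶ (fpow Om a₃).obj C₃)
      (v : (fpow Om a₃).obj C₃ ⟶ (fpow Om a₂).obj C₂)
      (w : (fpow Om a₂).obj C₂ ⟶ (fpow Om a₁).obj C₁)
      (h₁ : (a₃ : ℤ) + n₂ = (a₂ : ℤ) + n₃) (h₂ : (a₂ : ℤ) + n₁ = (a₁ : ℤ) + n₂)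
      (h₃ : ((a₁ + 1 : ℕ) : ℤ) + (n₃ - 1) = (a₃ : ℤ) + n₁),
      LTTriangle.mk ((fpow Om a₃).obj C₃) ((fpow Om a₂).obj C₂) ((fpow Om a₁).obj C₁)
        (((k.negOnePow : ℤˣ) : ℤ) • u) (((k.negOnePow : ℤˣ) : ℤ) • v)
        (((k.negOnePow : ℤˣ) : ℤ) • w) ∈ L.dist ∧
      T = Tri.mk (st.obj C₃ n₃) (st.obj C₂ n₂) (st.obj C₁ n₁)
            (st.lift a₃ a₂ n₃ n₂ h₁ v) (st.lift a₂ a₁ n₂ n₁ h₂ w)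
            (st.lift (a₁ + 1) a₃ n₁ (n₃ - 1) h₃ u ≫ (σ C₃ n₃).inv)}

/-- The syzygy functor `Ω` on the stable category, together with its defining data:
for each object a chosen conflation `0 → K X → P X → X → 0` with `P X` projective,
identifications `Ω(X̲) ≅ K X`, and the characterization of `Ω` on morphisms by
lifting along these conflations. -/
structure SyzygyFunctor (E : ExactStructure C) where
  Om : St E ⥤ St E
  P : C → C
  projP : ∀ X : C, E.Proj (P X)
  K : C → C
  i : ∀ X : C, K X ⟶ P X
  p : ∀ X : C, P X ⟶ X
  sesX : ∀ X : C, E.ses (i X) (p X)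
  iso : ∀ X : C, Om.obj ((stq E).obj X) ≅ (stq E).obj (K X)
  map_spec : ∀ {X Y : C} (f : X ⟶ Y) (g : P X ⟶ P Y) (k : K X ⟶ K Y),
      g ≫ p Y = p X ≫ f → i X ≫ g = k ≫ i Y →
      Om.map ((stq E).map f) = (iso X).hom ≫ (stq E).map k ≫ (iso Y).inv

/-- The standard triangles of the stable category of an exact category with enough
projectives (Theorem 3.2): `Ω E₁ → E₃ → E₂ → E₁` induced by a conflation
`0 → E₃ → E₂ → E₁ → 0` and a lift of diagrams against `0 → K E₁ → P E₁ → E₁ → 0`. -/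
def stdStableTriangles (E : ExactStructure C) (SF : SyzygyFunctor E) :
    Set (LTTriangle (St E) SF.Om) :=
  {T | ∃ (E₁ E₂ E₃ : C) (v : E₃ ⟶ E₂) (w : E₂ ⟶ E₁) (_ : E.ses v w)
      (u : SF.K E₁ ⟶ E₃) (g : SF.P E₁ ⟶ E₂),
      SF.i E₁ ≫ g = u ≫ v ∧ g ≫ w = SF.p E₁ ∧
      (LTTriangle.mk ((stq E).obj E₃) ((stq E).obj E₂) ((stq E).obj E₁)
        ((SF.iso E₁).hom ≫ (stq E).map u) ((stq E).map v) ((stq E).map w)).IsoSeq T}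

/-- Gorenstein projective objects: cycles of totally acyclic complexes of projectives.
The totally acyclic complex is encoded by its sequence of conflations
`0 → G_i → P_i → G_{i-1} → 0` with `P_i` projective, together with the condition that
each map `G_i → Q` to a projective extends to `P_i` (i.e. `Hom(P_•, Q)` is acyclic). -/
def GorensteinProj (E : ExactStructure C) (G : C) : Prop :=
  ∃ (Gs Ps : ℤ → C) (g : ∀ i : ℤ, Gs i ⟶ Ps i) (p : ∀ i : ℤ, Ps i ⟶ Gs (i - 1)),
    Gs 0 = G ∧ ∀ i : ℤ, E.Proj (Ps i) ∧ E.ses (g i) (p i) ∧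
      (∀ Q : C, E.Proj Q → ∀ f : Gs i ⟶ Q, ∃ h : Ps i ⟶ Q, g i ≫ h = f)

/-- `Syz E n X W` : `W` is an `n`-th syzygy of `X`, i.e. there is a chain of
conflations `0 → K_{j+1} → P_j → K_j → 0` with each `P_j` projective, `K_0 = X`,
`K_n = W`. -/
inductive Syz (E : ExactStructure C) : ℕ → C → C → Prop
  | zero (X : C) : Syz E 0 X X
  | succ {n : ℕ} {X K W P : C} (h : Syz E n X K) (hP : E.Proj P) (w : W ⟶ P) (p : P ⟶ K)
      (hs : E.ses w p) : Syz E (n + 1) X W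

/-- `X` has finite Gorenstein projective dimension: some syzygy `Ω^n(X̲)` is
(stably isomorphic to) a Gorenstein projective object. -/
def FiniteGPdim (E : ExactStructure C) (X : C) : Prop :=
  ∃ (n : ℕ) (W G : C), Syz E n X W ∧ GorensteinProj E G ∧
    Nonempty ((stq E).obj W ≅ (stq E).obj G)

end Paper

namespace Paper

/-- Restriction of an endofunctor to a full subcategory it preserves. -/
def restrictFunctor {D : Type u'} [Category.{v'} D] (F : D ⥤ D) (X : Set D)
    (h : ∀ A ∈ X, F.obj A ∈ X) :
    ObjectProperty.FullSubcategory (fun A => A ∈ X) ⥤ ObjectProperty.FullSubcategory (fun A => A ∈ X) where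
  obj A := ⟨F.obj A.obj, h A.obj A.property⟩
  map f := ⟨F.map f.hom⟩
  map_id A := by ext; exact F.map_id A.obj
  map_comp f g := by ext; exact F.map_comp f.hom g.hom

/-!
In `ℤ𝒞`, morphisms `(A, dm) ⟶ (B, dn)` form the colimit of `Hom(Ω^a A, Ω^b B)` over
`a + dn = b + dm`. The indices with `a` and `b` multiples of `d` are cofinal in this system,
and the subsystem they form is exactly the one defining `Hom((A, m), (B, n))` in the
stabilization of `(𝒳, Ω^d)`. So realizing `(A, n)` as `(A, dn)` makes `dℤ𝒳` a stabilization
of `(𝒳, Ω^d)`.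
-/

section Raise

variable {D : Type*} [Category D] (F : D ⥤ D)

lemma fpow_add_obj (c : ℕ) :
    ∀ (j : ℕ) (A : D), (fpow F (c + j)).obj A = (fpow F j).obj ((fpow F c).obj A)
  | 0, _ => rfl
  | j + 1, A => congrArg F.obj (fpow_add_obj c j A)

lemma raiseN_eq_fpow_map (j : ℕ) {A B : D} {a b : ℕ} (f : (fpow F a).obj A ⟶ (fpow F b).obj B) :
    raiseN F j f = eqToHom (fpow_add_obj F a j A) ≫ (fpow F j).map f ≫
      eqToHom (fpow_add_obj F b j B).symm := by
  induction j with
  | zero => exact (by simp : f = 𝟙 _ ≫ f ≫ 𝟙 _)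
  | succ j ih =>
    change F.map (raiseN F j f) = _
    simp [ih, fpow, eqToHom_map]

lemma raiseN_heq_congr {A B : D} {a a' b b' : ℕ} (ha : a = a') (hb : b = b')
    {f : (fpow F a).obj A ⟶ (fpow F b).obj B} {f' : (fpow F a').obj A ⟶ (fpow F b').obj B}
    (hf : HEq f f') (t : ℕ) : HEq (raiseN F t f) (raiseN F t f') := by
  subst ha hb
  rw [eq_of_heq hf]

lemma raiseN_add_heq (j t : ℕ) {A B : D} {a b : ℕ} (f : (fpow F a).obj A ⟶ (fpow F b).obj B) :
    HEq (raiseN F (j + t) f) (raiseN F t (raiseN F j f)) := by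
  induction t with
  | zero => rfl
  | succ t ih =>
    exact raiseN_heq_congr F (Nat.add_assoc a j t).symm (Nat.add_assoc b j t).symm ih 1

lemma raiseN_heq_of_heq {A B : D} {a a' b b' j j' k k' t : ℕ}
    {f : (fpow F a).obj A ⟶ (fpow F b).obj B} {f' : (fpow F a').obj A ⟶ (fpow F b').obj B}
    (ha : a + j = a' + j') (hb : b + j = b' + j') (h : HEq (raiseN F j f) (raiseN F j' f'))
    (hk : j + t = k) (hk' : j' + t = k') : HEq (raiseN F k f) (raiseN F k' f') := by
  subst hk hk'
  exact (raiseN_add_heq F j t f).trans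
    ((raiseN_heq_congr F ha hb h t).trans (raiseN_add_heq F j' t f').symm)

end Raise

namespace IsStabilization

variable {D : Type*} [Category D] [Preadditive D] {F : D ⥤ D} {S : Type*} [Category S]
  [Preadditive S] (st : IsStabilization F S)

lemma lift_raiseN (j : ℕ) {A B : D} {a b : ℕ} {m n : ℤ} (h : (a : ℤ) + n = (b : ℤ) + m)
    (h' : ((a + j : ℕ) : ℤ) + n = ((b + j : ℕ) : ℤ) + m) (f : (fpow F a).obj A ⟶ (fpow F b).obj B) :
    st.lift (a + j) (b + j) m n h' (raiseN F j f) = st.lift a b m n h f := by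
  induction j with
  | zero => rfl
  | succ j ih =>
    have h'' : ((a + j : ℕ) : ℤ) + n = ((b + j : ℕ) : ℤ) + m := by push_cast at *; omega
    exact (st.lift_raise (a + j) (b + j) m n h'' h' (raiseN F j f)).trans (ih h'')

lemma lift_congr {A B : D} {a a' b b' : ℕ} {m n : ℤ} (ha : a = a') (hb : b = b')
    (h : (a : ℤ) + n = (b : ℤ) + m) (h' : (a' : ℤ) + n = (b' : ℤ) + m)
    {f : (fpow F a).obj A ⟶ (fpow F b).obj B} {f' : (fpow F a').obj A ⟶ (fpow F b').obj B}
    (hf : HEq f f') : st.lift a b m n h f = st.lift a' b' m n h' f' := by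
  subst ha hb
  rw [eq_of_heq hf]

end IsStabilization

/-- Raising by `d * a - a` moves the index `a` to the multiple `d * a`; this is what makes
the multiples of `d` cofinal in the colimits defining the stabilization. -/
lemma exists_add_mul_sub_eq_mul {d a b : ℕ} {k : ℤ} (hd : 0 < d) (h : (b : ℤ) = a + d * k) :
    ∃ b' : ℕ, (b' : ℤ) = a + k ∧ b + (d * a - a) = d * b' := by
  have hda : a ≤ d * a := Nat.le_mul_of_pos_left a hd
  have hk : 0 ≤ (a : ℤ) + k := by
    have hda' : (a : ℤ) ≤ d * a := by exact_mod_cast hda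
    have hd' : (0 : ℤ) < d := by exact_mod_cast hd
    nlinarith
  lift (a : ℤ) + k to ℕ using hk with b' hb'
  refine ⟨b', rfl, ?_⟩
  zify [hda]
  rw [hb', h]
  ring

lemma cast_mul_add_eq_of_add_eq (d : ℕ) {a b : ℕ} {m n : ℤ} (h : (a : ℤ) + n = (b : ℤ) + m) :
    ((d * a : ℕ) : ℤ) + d * n = ((d * b : ℕ) : ℤ) + d * m := by
  push_cast
  linear_combination (d : ℤ) * h

section Restrict

variable {D : Type*} [Category D] {F : D ⥤ D} {X : Set D} {d : ℕ}
  (hcl : ∀ A ∈ X, (fpow F d).obj A ∈ X)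

lemma fpow_restrictFunctor_obj (a : ℕ) (A : ObjectProperty.FullSubcategory (· ∈ X)) :
    ((fpow (restrictFunctor (fpow F d) X hcl) a).obj A).obj = (fpow F (d * a)).obj A.obj := by
  induction a with
  | zero => rfl
  | succ a ih =>
    change (fpow F d).obj ((fpow (restrictFunctor (fpow F d) X hcl) a).obj A).obj = _
    rw [ih]
    exact (fpow_add_obj F (d * a) d A.obj).symm

def toFpowHom {a b : ℕ} {A B : ObjectProperty.FullSubcategory (· ∈ X)}
    (f : (fpow (restrictFunctor (fpow F d) X hcl) a).obj A ⟶
      (fpow (restrictFunctor (fpow F d) X hcl) b).obj B) :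
    (fpow F (d * a)).obj A.obj ⟶ (fpow F (d * b)).obj B.obj :=
  eqToHom (fpow_restrictFunctor_obj hcl a A).symm ≫ f.hom ≫
    eqToHom (fpow_restrictFunctor_obj hcl b B)

variable {hcl}

lemma toFpowHom_id (a : ℕ) (A : ObjectProperty.FullSubcategory (· ∈ X)) :
    toFpowHom hcl (𝟙 ((fpow (restrictFunctor (fpow F d) X hcl) a).obj A)) = 𝟙 _ := by
  simp [toFpowHom]

lemma toFpowHom_comp {a b c : ℕ} {A B C : ObjectProperty.FullSubcategory (· ∈ X)}
    (f : (fpow (restrictFunctor (fpow F d) X hcl) a).obj A ⟶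
      (fpow (restrictFunctor (fpow F d) X hcl) b).obj B)
    (g : (fpow (restrictFunctor (fpow F d) X hcl) b).obj B ⟶
      (fpow (restrictFunctor (fpow F d) X hcl) c).obj C) :
    toFpowHom hcl (f ≫ g) = toFpowHom hcl f ≫ toFpowHom hcl g := by
  simp [toFpowHom]

lemma toFpowHom_add [Preadditive D] {a b : ℕ} {A B : ObjectProperty.FullSubcategory (· ∈ X)}
    (f g : (fpow (restrictFunctor (fpow F d) X hcl) a).obj A ⟶
      (fpow (restrictFunctor (fpow F d) X hcl) b).obj B) :
    toFpowHom hcl (f + g) = toFpowHom hcl f + toFpowHom hcl g := by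
  simp only [toFpowHom, show (f + g).hom = f.hom + g.hom from rfl, Preadditive.add_comp,
    Preadditive.comp_add]

lemma toFpowHom_map {a b : ℕ} {A B : ObjectProperty.FullSubcategory (· ∈ X)}
    (f : (fpow (restrictFunctor (fpow F d) X hcl) a).obj A ⟶
      (fpow (restrictFunctor (fpow F d) X hcl) b).obj B) :
    toFpowHom hcl (a := a + 1) (b := b + 1) ((restrictFunctor (fpow F d) X hcl).map f) =
      raiseN F d (toFpowHom hcl f) := by
  rw [raiseN_eq_fpow_map]
  change eqToHom _ ≫ (fpow F d).map f.hom ≫ eqToHom _ = _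
  simp [toFpowHom, eqToHom_map]

lemma toFpowHom_raiseN {a b : ℕ} {A B : ObjectProperty.FullSubcategory (· ∈ X)}
    (f : (fpow (restrictFunctor (fpow F d) X hcl) a).obj A ⟶
      (fpow (restrictFunctor (fpow F d) X hcl) b).obj B) :
    ∀ J : ℕ, HEq (toFpowHom hcl (raiseN (restrictFunctor (fpow F d) X hcl) J f))
      (raiseN F (d * J) (toFpowHom hcl f))
  | 0 => .rfl
  | J + 1 => by
    rw [show raiseN (restrictFunctor (fpow F d) X hcl) (J + 1) f =
      (restrictFunctor (fpow F d) X hcl).map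
        (raiseN (restrictFunctor (fpow F d) X hcl) J f) from rfl, toFpowHom_map]
    exact (raiseN_heq_congr F (Nat.mul_add d a J) (Nat.mul_add d b J)
      (toFpowHom_raiseN f J) d).trans (raiseN_add_heq F (d * J) d _).symm

lemma heq_of_toFpowHom_heq {a b a' b' : ℕ} {A B : ObjectProperty.FullSubcategory (· ∈ X)}
    (ha : a = a') (hb : b = b')
    {f : (fpow (restrictFunctor (fpow F d) X hcl) a).obj A ⟶
      (fpow (restrictFunctor (fpow F d) X hcl) b).obj B}
    {f' : (fpow (restrictFunctor (fpow F d) X hcl) a').obj A ⟶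
      (fpow (restrictFunctor (fpow F d) X hcl) b').obj B}
    (h : HEq (toFpowHom hcl f) (toFpowHom hcl f')) : HEq f f' := by
  subst ha hb
  refine heq_of_eq (ObjectProperty.hom_ext _ ?_)
  simpa only [toFpowHom, cancel_epi, cancel_mono] using eq_of_heq h

lemma exists_toFpowHom_heq {a b c c' : ℕ} {A B : ObjectProperty.FullSubcategory (· ∈ X)}
    (hc : c = d * a) (hc' : c' = d * b) (g : (fpow F c).obj A.obj ⟶ (fpow F c').obj B.obj) :
    ∃ f : (fpow (restrictFunctor (fpow F d) X hcl) a).obj A ⟶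
      (fpow (restrictFunctor (fpow F d) X hcl) b).obj B, HEq (toFpowHom hcl f) g := by
  subst hc hc'
  exact ⟨⟨eqToHom (fpow_restrictFunctor_obj hcl a A) ≫ g ≫
    eqToHom (fpow_restrictFunctor_obj hcl b B).symm⟩, heq_of_eq (by simp [toFpowHom])⟩

end Restrict

namespace IsStabilization

variable {D : Type*} [Category D] [Preadditive D] {F : D ⥤ D} {S : Type*} [Category S]
  [Preadditive S] (st : IsStabilization F S) {X : Set D} {d : ℕ}
  (hcl : ∀ A ∈ X, (fpow F d).obj A ∈ X)

lemma exists_lift_toFpowHom (hd : 0 < d) {A B : ObjectProperty.FullSubcategory (· ∈ X)}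
    {m n : ℤ} (φ : st.obj A.obj (d * m) ⟶ st.obj B.obj (d * n)) :
    ∃ (a b : ℕ) (h : (a : ℤ) + n = b + m) (f : (fpow (restrictFunctor (fpow F d) X hcl) a).obj A ⟶
      (fpow (restrictFunctor (fpow F d) X hcl) b).obj B),
      φ = st.lift (d * a) (d * b) (d * m) (d * n) (cast_mul_add_eq_of_add_eq d h)
        (toFpowHom hcl f) := by
  obtain ⟨a, b, h, f, rfl⟩ := st.lift_surj φ
  have hda : a ≤ d * a := Nat.le_mul_of_pos_left a hd
  obtain ⟨b', hb'_cast, hb'⟩ := exists_add_mul_sub_eq_mul (a := a) (b := b) (k := n - m) hd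
    (by linear_combination -h)
  obtain ⟨f', hf'⟩ := exists_toFpowHom_heq (hcl := hcl) (A := A) (B := B)
    (Nat.add_sub_cancel' hda) hb' (raiseN F (d * a - a) f)
  refine ⟨a, b', by linear_combination -hb'_cast, f', ?_⟩
  rw [← st.lift_raiseN (d * a - a) h (by push_cast [hda]; linear_combination h) f]
  exact st.lift_congr (Nat.add_sub_cancel' hda) hb' _ _ hf'.symm

lemma exists_raiseN_heq_of_lift_toFpowHom_eq (hd : 0 < d)
    {A B : ObjectProperty.FullSubcategory (· ∈ X)} {a b a' b' : ℕ} {m n : ℤ}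
    (h : (a : ℤ) + n = b + m) (h' : (a' : ℤ) + n = b' + m)
    (f : (fpow (restrictFunctor (fpow F d) X hcl) a).obj A ⟶
      (fpow (restrictFunctor (fpow F d) X hcl) b).obj B)
    (f' : (fpow (restrictFunctor (fpow F d) X hcl) a').obj A ⟶
      (fpow (restrictFunctor (fpow F d) X hcl) b').obj B)
    (hff' : st.lift (d * a) (d * b) (d * m) (d * n) (cast_mul_add_eq_of_add_eq d h)
        (toFpowHom hcl f) =
      st.lift (d * a') (d * b') (d * m) (d * n) (cast_mul_add_eq_of_add_eq d h')
        (toFpowHom hcl f')) :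
    ∃ j j' : ℕ, a + j = a' + j' ∧ b + j = b' + j' ∧
      HEq (raiseN (restrictFunctor (fpow F d) X hcl) j f)
        (raiseN (restrictFunctor (fpow F d) X hcl) j' f') := by
  obtain ⟨j, j', ha, hb, hr⟩ := st.lift_inj _ _ _ _ _ _ _ _ _ _ hff'
  have hdj : j ≤ d * j := Nat.le_mul_of_pos_left j hd
  obtain ⟨J', hJ'_cast, hJ'⟩ := exists_add_mul_sub_eq_mul (a := j) (b := j') (k := a - a') hd
    (by zify at ha; linear_combination -ha)
  have hA : a + j = a' + J' := by omega
  have hB : b + j = b' + J' := by omega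
  refine ⟨j, J', hA, hB, heq_of_toFpowHom_heq hA hB ?_⟩
  exact (toFpowHom_raiseN f j).trans ((raiseN_heq_of_heq F ha hb hr (Nat.add_sub_cancel' hdj)
    hJ').trans (toFpowHom_raiseN f' J').symm)

def fullSubcategoryDZSet (hd : 0 < d) :
    IsStabilization (restrictFunctor (fpow F d) X hcl)
      (ObjectProperty.FullSubcategory (· ∈ dZSet st X d)) where
  obj A n := ⟨st.obj A.obj (d * n), A.obj, n, A.property, ⟨Iso.refl _⟩⟩
  lift a b m n h f :=
    ⟨st.lift (d * a) (d * b) (d * m) (d * n) (cast_mul_add_eq_of_add_eq d h) (toFpowHom hcl f)⟩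
  lift_raise a b m n h h' f := by
    ext
    change st.lift (d * a + d) (d * b + d) _ _ _
      (toFpowHom hcl (a := a + 1) (b := b + 1) ((restrictFunctor (fpow F d) X hcl).map f)) = _
    rw [toFpowHom_map]
    exact st.lift_raiseN d _ _ _
  lift_id {A} a n h := by
    ext
    change st.lift (d * a) (d * a) _ _ _ (toFpowHom hcl (𝟙 _)) = 𝟙 _
    rw [toFpowHom_id, st.lift_id]
  lift_comp a b c m n p hab hbc hac f g := by
    ext
    change st.lift _ _ _ _ _ (toFpowHom hcl f) ≫ st.lift _ _ _ _ _ (toFpowHom hcl g) =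
      st.lift _ _ _ _ _ (toFpowHom hcl (f ≫ g))
    rw [st.lift_comp _ _ _ _ _ _ _ _ (cast_mul_add_eq_of_add_eq d hac), toFpowHom_comp]
  lift_add a b m n h f g := by
    ext
    change st.lift _ _ _ _ _ (toFpowHom hcl (f + g)) =
      st.lift _ _ _ _ _ (toFpowHom hcl f) + st.lift _ _ _ _ _ (toFpowHom hcl g)
    rw [toFpowHom_add, st.lift_add]
  lift_surj φ := by
    obtain ⟨a, b, h, f, hφ⟩ := st.exists_lift_toFpowHom hcl hd φ.hom
    exact ⟨a, b, h, f, ObjectProperty.hom_ext _ hφ⟩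
  lift_inj _ _ _ _ _ _ h h' f f' hff' :=
    st.exists_raiseN_heq_of_lift_toFpowHom_eq hcl hd h h' f f' (congrArg (·.hom) hff')
  dense s := by
    obtain ⟨A, k, hA, ⟨e⟩⟩ := s.property
    exact ⟨⟨A, hA⟩, k, ⟨ObjectProperty.isoMk _ e⟩⟩

end IsStabilization

theorem statement19_general {D : Type u} [Category.{v} D] [Preadditive D]
    {Om : D ⥤ D} (X : Set D) (d : ℕ) (hd : 0 < d)
    (hcl : ∀ A ∈ X, (fpow Om d).obj A ∈ X)
    {S : Type w} [Category.{w'} S] [Preadditive S] (st : IsStabilization Om S) :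
    ∃ stX : IsStabilization (restrictFunctor (fpow Om d) X hcl)
        (ObjectProperty.FullSubcategory (fun s => s ∈ dZSet st X d)),
      ∀ (A : D) (hA : A ∈ X) (n : ℤ),
        Nonempty ((stX.obj ⟨A, hA⟩ n).obj ≅ st.obj A ((d : ℤ) * n)) :=
  ⟨st.fullSubcategoryDZSet hcl hd, fun _ _ _ => ⟨Iso.refl _⟩⟩

/-- Lemma 5.8. Let `𝒳` be a `dℤ`-cluster tilting subcategory of a
left triangulated category `𝒞`.  The canonical functor `(X, n) ↦ (X, dn)` induces an
equivalence between the stabilization `ℤ𝒳` of `𝒳` with respect to `Ω^d` and the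
subcategory `dℤ𝒳` of `ℤ𝒞`.  Equivalently (by the uniqueness of stabilizations, as
formalized here): the full subcategory `dℤ𝒳 ⊆ ℤ𝒞` is itself a stabilization of
`(𝒳, Ω^d)`, with `(X, n)` realized by `(X, dn) ∈ ℤ𝒞`. -/
theorem statement19 {D : Type u} [Category.{v} D] [Preadditive D] [HasZeroObject D]
    {Om : D ⥤ D} (L : LeftTriangStruct D Om) (X : Set D) (d : ℕ) (hd : 0 < d)
    (hX : ClusterTiltingLTDZ L X d) (hcl : ∀ A ∈ X, (fpow Om d).obj A ∈ X)
    {S : Type w} [Category.{w'} S] [Preadditive S] (st : IsStabilization Om S) :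
    ∃ stX : IsStabilization (restrictFunctor (fpow Om d) X hcl)
        (ObjectProperty.FullSubcategory (fun s => s ∈ dZSet st X d)),
      ∀ (A : D) (hA : A ∈ X) (n : ℤ),
        Nonempty ((stX.obj ⟨A, hA⟩ n).obj ≅ st.obj A ((d : ℤ) * n)) :=
  statement19_general X d hd hcl st

end Paper
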